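/- arXiv:2408.04907 — 6 statements merged into one kernel-verified Lean document; each statement's English description precedes it below -/
import Mathlib

section
/- Let m ≥ 1 and let 𝒳, 𝒴 ⊆ ℝ^m be linear subspaces satisfying: (a) for every index set I ⊆ {1,…,m} and for both 𝒵 = 𝒳 and 𝒵 = 𝒴, dim(𝒵 + span{e_i : i ∈ I}) = min(dim 𝒵 + |I|, m), where e_i denotes the i-th standard basis vector; and (b) dim 𝒳 + dim 𝒴 ≤ m. Then the set W = {w ∈ ℝ^m : 𝒴 ∩ w𝒳 ≠ {0}} has Lebesgue measure zero, where w𝒳 = {(w_1 x_1, …, w_m x_m) : x ∈ 𝒳} denotes the set of pointwise (coordinatewise) products of w with elements of 𝒳. -/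
/-!
If `y = w * x ≠ 0` with `x ∈ 𝒳`, `y ∈ 𝒴`, then on any `dim 𝒳 + dim 𝒴` coordinates the vectors
`w * x_a` and `y_b` (for bases `x_a`, `y_b`) are linearly dependent, so the square matrix they form
there is singular. Its determinant is a polynomial in `w`; it does not vanish identically, because
at the indicator `w₀` of the first `dim 𝒳` of those coordinates a kernel vector would give `x ∈ 𝒳`,
`y ∈ 𝒴` with `y` vanishing on the last `dim 𝒴` coordinates and `x + y` on the first `dim 𝒳`;
genericity (a nonzero vector of a generic `k`-dimensional subspace never vanishes on `k`
coordinates) then forces `y = 0` and `x = 0`. Finally the zero set of a nonzero real polynomial is Lebesgue-null, by Fubini and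
induction on the number of variables.
-/

open MeasureTheory MvPolynomial Module Submodule Finset Matrix

theorem volume_eq_zero_of_ae_volume_cons_preimage_eq_zero {n : ℕ} {s : Set (Fin (n + 1) → ℝ)}
    (hs : MeasurableSet s) (h : ∀ᵐ y : Fin n → ℝ, volume {t : ℝ | Fin.cons t y ∈ s} = 0) :
    volume s = 0 := by
  let e := MeasurableEquiv.piFinSuccAbove (fun _ : Fin (n + 1) => ℝ) 0
  have hcons (t : ℝ) (y : Fin n → ℝ) : e.symm (t, y) = Fin.cons t y := Fin.insertNth_zero' t y
  rw [← (volume_preserving_piFinSuccAbove (fun _ : Fin (n + 1) => ℝ) 0).symm.measure_preimage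
    hs.nullMeasurableSet]
  change (volume.prod volume) _ = 0
  rw [Measure.prod_apply_symm (e.symm.measurable hs)]
  simp only [Set.preimage_preimage, hcons]
  exact (lintegral_congr_ae h).trans lintegral_zero

theorem MvPolynomial.volume_setOf_eval_eq_zero {n : ℕ} {p : MvPolynomial (Fin n) ℝ} (hp : p ≠ 0) :
    volume {x | eval x p = 0} = 0 := by
  induction n with
  | zero =>
    obtain ⟨a, rfl⟩ := C_surjective (Fin 0) p
    simp_all
  | succ n ih =>
    obtain ⟨k, hk⟩ : ∃ k, (finSuccEquiv ℝ n p).coeff k ≠ 0 := by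
      by_contra! h
      exact hp ((finSuccEquiv ℝ n).injective (Polynomial.ext (by simpa using h)))
    refine volume_eq_zero_of_ae_volume_cons_preimage_eq_zero
      (isClosed_singleton.preimage (continuous_eval p)).measurableSet ?_
    filter_upwards [measure_eq_zero_iff_ae_notMem.mp (ih hk)] with y hy
    have hne : (finSuccEquiv ℝ n p).map (eval y) ≠ 0 := fun h0 =>
      hy (by simpa using congrArg (Polynomial.coeff · k) h0)
    simpa [eval_eq_eval_mv_eval'] using
      (Polynomial.finite_setOfPred_isRoot hne).measure_zero volume

theorem Pi.mem_span_single_image_iff {R ι : Type*} [Semiring R] [Finite ι] [DecidableEq ι]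
    {I : Set ι} {x : ι → R} :
    x ∈ span R ((fun i => Pi.single i (1 : R)) '' I) ↔ ∀ i ∉ I, x i = 0 := by
  simp_rw [← Pi.basisFun_apply, Basis.mem_span_image, Set.subset_def, Finset.mem_coe,
    Finsupp.mem_support_iff, Pi.basisFun_repr]
  exact forall_congr' fun i => not_imp_comm

theorem Pi.finrank_span_single_image_le {K ι : Type*} [DivisionRing K] [DecidableEq ι]
    (I : Finset ι) :
    finrank K (span K ((fun i => Pi.single i (1 : K)) '' (I : Set ι))) ≤ #I := by
  classical
  rw [← Finset.coe_image]
  exact (finrank_span_finset_le_card _).trans card_image_le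

section CoordinateGeneric

variable {K ι : Type*} [DivisionRing K] [Fintype ι] [DecidableEq ι]

theorem Submodule.eq_zero_of_apply_eq_zero_of_sup_span_single_eq_top {𝒵 : Submodule K (ι → K)}
    {S : Finset ι}
    (hsup : 𝒵 ⊔ span K ((fun i => Pi.single i (1 : K)) '' ((Sᶜ : Finset ι) : Set ι)) = ⊤)
    (hS : finrank K 𝒵 ≤ #S) {z : ι → K} (hz : z ∈ 𝒵) (hzS : ∀ i ∈ S, z i = 0) : z = 0 := by
  set 𝒮 := span K ((fun i => Pi.single i (1 : K)) '' ((Sᶜ : Finset ι) : Set ι))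
  have hinf : 𝒵 ⊓ 𝒮 = ⊥ := by
    have hdim := Submodule.finrank_sup_add_finrank_inf_eq 𝒵 𝒮
    have h𝒮 : finrank K 𝒮 ≤ #Sᶜ := Pi.finrank_span_single_image_le Sᶜ
    rw [hsup, finrank_top, finrank_fintype_fun_eq_card] at hdim
    rw [card_compl] at h𝒮
    rw [← finrank_eq_zero]
    have := S.card_le_univ
    omega
  have hz𝒮 : z ∈ 𝒮 := Pi.mem_span_single_image_iff.mpr fun i hi => hzS i (by simpa using hi)
  simpa [hinf] using mem_inf.mpr ⟨hz, hz𝒮⟩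

def Submodule.IsCoordinateGeneric (𝒵 : Submodule K (ι → K)) : Prop :=
  ∀ I : Finset ι, finrank K ↥(𝒵 ⊔ span K ((fun i => Pi.single i (1 : K)) '' (I : Set ι))) =
    min (finrank K 𝒵 + #I) (Fintype.card ι)

theorem Submodule.IsCoordinateGeneric.eq_zero_of_apply_eq_zero {𝒵 : Submodule K (ι → K)}
    (h𝒵 : 𝒵.IsCoordinateGeneric) {S : Finset ι} (hS : #S = finrank K 𝒵) {z : ι → K}
    (hz : z ∈ 𝒵) (hzS : ∀ i ∈ S, z i = 0) : z = 0 := by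
  refine eq_zero_of_apply_eq_zero_of_sup_span_single_eq_top (eq_top_of_finrank_eq ?_) hS.ge hz hzS
  rw [h𝒵, card_compl, finrank_fintype_fun_eq_card, ← hS, add_tsub_cancel_of_le S.card_le_univ,
    min_self]

end CoordinateGeneric

section ProductMatrix

variable {R ι κ α β : Type*} [CommRing R]

def productMatrix (r : κ → ι) (x : α → ι → R) (y : β → ι → R) (w : ι → R) :
    Matrix κ (α ⊕ β) R :=
  Matrix.of fun k => Sum.elim (fun a => w (r k) * x a (r k)) (fun b => y b (r k))

theorem productMatrix_map {S : Type*} [CommRing S] (f : R →+* S) (r : κ → ι) (x : α → ι → R)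
    (y : β → ι → R) (w : ι → R) :
    (productMatrix r x y w).map f =
      productMatrix r (fun a i => f (x a i)) (fun b i => f (y b i)) (fun i => f (w i)) := by
  ext k (a | b) <;> simp [productMatrix]

theorem productMatrix_mulVec_equivFun [Fintype α] [Fintype β] {𝒳 𝒴 : Submodule R (ι → R)}
    (bX : Basis α R 𝒳) (bY : Basis β R 𝒴) (r : κ → ι) (w : ι → R) (p : 𝒳 × 𝒴) (k : κ) :
    (productMatrix r (fun a => bX a) (fun b => bY b) w *ᵥ (bX.prod bY).equivFun p) k =
      w (r k) * (p.1 : ι → R) (r k) + (p.2 : ι → R) (r k) := by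
  rw [mulVec, dotProduct, Fintype.sum_sum_type]
  conv_rhs => rw [← bX.sum_repr p.1, ← bY.sum_repr p.2]
  simp only [productMatrix, of_apply, Sum.elim_inl, Sum.elim_inr, Basis.equivFun_apply,
    Basis.prod_repr_inl, Basis.prod_repr_inr, Submodule.coe_sum, Submodule.coe_smul,
    Finset.sum_apply, Pi.smul_apply, smul_eq_mul, Finset.mul_sum]
  congr 1 <;> exact sum_congr rfl fun _ _ => by ring

theorem det_productMatrix_eq_zero_iff [IsDomain R] [Fintype α] [Fintype β] [DecidableEq α]
    [DecidableEq β] {𝒳 𝒴 : Submodule R (ι → R)} (bX : Basis α R 𝒳) (bY : Basis β R 𝒴)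
    (r : α ⊕ β → ι) (w : ι → R) :
    (productMatrix r (fun a => bX a) (fun b => bY b) w).det = 0 ↔
      ∃ p : 𝒳 × 𝒴, p ≠ 0 ∧ ∀ k, w (r k) * (p.1 : ι → R) (r k) + (p.2 : ι → R) (r k) = 0 := by
  rw [← exists_mulVec_eq_zero_iff, (bX.prod bY).equivFun.surjective.exists]
  simp only [ne_eq, LinearEquiv.map_eq_zero_iff]
  simp only [funext_iff, productMatrix_mulVec_equivFun, Pi.zero_apply]

end ProductMatrix

section SingularSet

variable {K ι α β : Type*} [Field K] [Fintype ι] [DecidableEq ι] [Fintype α] [Fintype β]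
  [DecidableEq α] [DecidableEq β] {𝒳 𝒴 : Submodule K (ι → K)}

theorem Submodule.IsCoordinateGeneric.det_productMatrix_indicator_ne_zero
    (h𝒳 : 𝒳.IsCoordinateGeneric) (h𝒴 : 𝒴.IsCoordinateGeneric) (bX : Basis α K 𝒳)
    (bY : Basis β K 𝒴) (r : α ⊕ β ↪ ι) :
    (productMatrix r (fun a => (bX a : ι → K)) (fun b => bY b)
      ((Set.range (r ∘ Sum.inl)).indicator 1)).det ≠ 0 := by
  rw [Ne, det_productMatrix_eq_zero_iff]
  rintro ⟨⟨x, y⟩, hne, h⟩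
  have hy : y = 0 := by
    refine Subtype.ext (h𝒴.eq_zero_of_apply_eq_zero (S := univ.map (.trans .inr r))
      (by simp [finrank_eq_card_basis bY]) y.2 ?_)
    simpa [Set.indicator_of_notMem, r.injective.eq_iff] using fun b => h (.inr b)
  have hx : x = 0 := by
    refine Subtype.ext (h𝒳.eq_zero_of_apply_eq_zero (S := univ.map (.trans .inl r))
      (by simp [finrank_eq_card_basis bX]) x.2 ?_)
    simpa [hy] using fun a => h (.inl a)
  exact hne (by simp [hx, hy])

theorem Submodule.IsCoordinateGeneric.exists_mvPolynomial_ne_zero_vanishing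
    (h𝒳 : 𝒳.IsCoordinateGeneric) (h𝒴 : 𝒴.IsCoordinateGeneric)
    (hdim : finrank K 𝒳 + finrank K 𝒴 ≤ Fintype.card ι) :
    ∃ p : MvPolynomial ι K, p ≠ 0 ∧
      {w : ι → K | ∃ y ∈ 𝒴, y ≠ 0 ∧ ∃ x ∈ 𝒳, y = w * x} ⊆ {w | eval w p = 0} := by
  obtain ⟨r⟩ : Nonempty (Fin (finrank K 𝒳) ⊕ Fin (finrank K 𝒴) ↪ ι) :=
    Function.Embedding.nonempty_of_card_le (by simpa using hdim)
  let bX := Module.finBasis K 𝒳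
  let bY := Module.finBasis K 𝒴
  let M (w : ι → K) := productMatrix r (fun a => (bX a : ι → K)) (fun b => bY b) w
  let P : MvPolynomial ι K :=
    (productMatrix r (fun a i => C ((bX a : ι → K) i)) (fun b i => C ((bY b : ι → K) i)) X).det
  have heval (w : ι → K) : eval w P = (M w).det := by
    rw [RingHom.map_det, RingHom.mapMatrix_apply, productMatrix_map]
    simp [M]
  refine ⟨P, fun h0 => ?_, ?_⟩
  · exact h𝒳.det_productMatrix_indicator_ne_zero h𝒴 bX bY r (by rw [← heval, h0, map_zero])
  · rintro w ⟨y, hy, hy0, x, hx, rfl⟩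
    show eval w P = 0
    rw [heval, det_productMatrix_eq_zero_iff]
    exact ⟨(⟨x, hx⟩, -⟨w * x, hy⟩), by simp [hy0], fun k => by simp⟩

end SingularSet

theorem generic_subspaces_pointwise_product_null_general
    (m : ℕ)
    (𝒳 𝒴 : Submodule ℝ (Fin m → ℝ))
    (ha : ∀ 𝒵 ∈ ({𝒳, 𝒴} : Set (Submodule ℝ (Fin m → ℝ))), ∀ I : Finset (Fin m),
      Module.finrank ℝ
        ↥(𝒵 ⊔ Submodule.span ℝ ((fun i => Pi.single i (1 : ℝ)) '' (I : Set (Fin m))))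
        = min (Module.finrank ℝ ↥𝒵 + I.card) m)
    (hb : Module.finrank ℝ ↥𝒳 + Module.finrank ℝ ↥𝒴 ≤ m) :
    volume {w : Fin m → ℝ | ∃ y ∈ 𝒴, y ≠ 0 ∧ ∃ x ∈ 𝒳, y = w * x} = 0 := by
  obtain ⟨h𝒳, h𝒴⟩ : 𝒳.IsCoordinateGeneric ∧ 𝒴.IsCoordinateGeneric := by
    simpa [IsCoordinateGeneric] using ha
  obtain ⟨p, hp, hsub⟩ := h𝒳.exists_mvPolynomial_ne_zero_vanishing h𝒴 (by simpa using hb)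
  exact measure_mono_null hsub (volume_setOf_eval_eq_zero hp)

/-- If two subspaces `𝒳, 𝒴 ⊆ ℝ^m` are generic in the sense that adding spans of standard
basis vectors increases dimension as much as possible, and `dim 𝒳 + dim 𝒴 ≤ m`, then the set
of vectors `w` for which `𝒴` intersects the coordinatewise product `w𝒳` nontrivially is a
Lebesgue null set. -/
theorem generic_subspaces_pointwise_product_null
    (m : ℕ) (hm : 1 ≤ m)
    (𝒳 𝒴 : Submodule ℝ (Fin m → ℝ))
    (ha : ∀ 𝒵 ∈ ({𝒳, 𝒴} : Set (Submodule ℝ (Fin m → ℝ))), ∀ I : Finset (Fin m),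
      Module.finrank ℝ
        ↥(𝒵 ⊔ Submodule.span ℝ ((fun i => Pi.single i (1 : ℝ)) '' (I : Set (Fin m))))
        = min (Module.finrank ℝ ↥𝒵 + I.card) m)
    (hb : Module.finrank ℝ ↥𝒳 + Module.finrank ℝ ↥𝒴 ≤ m) :
    volume {w : Fin m → ℝ | ∃ y ∈ 𝒴, y ≠ 0 ∧ ∃ x ∈ 𝒳, y = w * x} = 0 :=
  generic_subspaces_pointwise_product_null_general m 𝒳 𝒴 ha hb
end

section
/- Let p, ℓ ≥ 1, let Λ ∈ ℝ^{p×p} with I_p − Λ invertible, let Γ ∈ ℝ^{p×ℓ}, and let v ∈ {1,…,p}, w ∈ {1,…,ℓ} with Γ_{vw} = 1. Set B = (I_p − Λ)^{-1}(I_p | Γ), let S ∈ ℝ^{(p+ℓ)×(p+ℓ)} be the permutation matrix that swaps coordinates v and p+w, and define Λ' = Λ + (Γ_{:,w} − e_v)·(I_p − Λ)_{v,:} (the outer product of the column vector Γ_{:,w} − e_v with the v-th row of I_p − Λ) and Γ' ∈ ℝ^{p×ℓ} by Γ'_{:,j} = Γ_{:,j} − Γ_{vj}(Γ_{:,w} −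 e_v) for j ≠ w and Γ'_{:,w} = 2e_v − Γ_{:,w}. Then (I_p − Λ')·(B S) = (I_p | Γ'). Entrywise, Λ'_{ij} = Λ_{ij} + (Γ_{iw} − δ_{iv})(δ_{vj} − Λ_{vj}), Γ'_{ij} = Γ_{ij} − Γ_{vj}(Γ_{iw} − δ_{iv}) for j ≠ w, and Γ'_{iw} = −Γ_{iw} + 2δ_{iv}, where δ is the Kronecker delta. -/
/-!
Put `u := Γ_{:,w} − e_v`. The new coefficient matrix is a rank-one update of `Λ` along the
`v`-th row of `I − Λ`, so `I − Λ' = (I − u e_vᵀ)(I − Λ)` and hence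
`(I − Λ') B = (I − u e_vᵀ)(I | Γ)`: every column `c` of `(I | Γ)` becomes `c − c_v u`.
Since `Γ_{vw} = 1`, the latent column `Γ_{:,w}` becomes `e_v` and the source column `e_v`
becomes `e_v − u = 2e_v − Γ_{:,w}`; swapping the two columns gives `(I | Γ')`.
-/

open Matrix

namespace Matrix

variable {m n R : Type*} [Fintype m] [DecidableEq m] [Ring R]

theorem one_sub_vecMulVec_single_mul (u : m → R) (v : m) (M : Matrix m n R) :
    (1 - vecMulVec u (Pi.single v 1)) * M = M - vecMulVec u (M v) := by
  rw [Matrix.sub_mul, Matrix.one_mul, vecMulVec_mul, single_one_vecMul, row]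

theorem one_sub_add_vecMulVec_row_eq_mul (Λ : Matrix m m R) (u : m → R) (v : m) :
    1 - (Λ + vecMulVec u ((1 - Λ) v)) = (1 - vecMulVec u (Pi.single v 1)) * (1 - Λ) := by
  rw [one_sub_vecMulVec_single_mul]
  abel

end Matrix

theorem swap_source_latent_column_general
    (p ℓ : ℕ)
    (Λ : Matrix (Fin p) (Fin p) ℝ) (hΛ : IsUnit (1 - Λ))
    (Γ : Matrix (Fin p) (Fin ℓ) ℝ)
    (v : Fin p) (w : Fin ℓ) (hΓvw : Γ v w = 1)
    (B : Matrix (Fin p) (Fin p ⊕ Fin ℓ) ℝ)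
    (hB : B = (1 - Λ)⁻¹ * Matrix.fromCols 1 Γ)
    (Λ' : Matrix (Fin p) (Fin p) ℝ)
    (hΛ' : ∀ i j, Λ' i j =
      Λ i j + (Γ i w - (if i = v then 1 else 0)) *
        ((if v = j then 1 else 0) - Λ v j))
    (Γ' : Matrix (Fin p) (Fin ℓ) ℝ)
    (hΓ' : ∀ i j, Γ' i j =
      if j = w then -Γ i w + 2 * (if i = v then 1 else 0)
      else Γ i j - Γ v j * (Γ i w - (if i = v then 1 else 0))) :
    (1 - Λ') * B.submatrix id (Equiv.swap (Sum.inl v) (Sum.inr w)) =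
      Matrix.fromCols 1 Γ' := by
  set u : Fin p → ℝ := (Γ · w) - Pi.single v 1
  have hΛ'_eq : Λ' = Λ + vecMulVec u ((1 - Λ) v) := by
    ext i j
    simp [hΛ', u, vecMulVec_apply, one_apply, Pi.single_apply]
  have hB' : (1 - Λ') * B = fromCols 1 Γ - vecMulVec u (fromCols 1 Γ v) := by
    rw [hB, hΛ'_eq, one_sub_add_vecMulVec_row_eq_mul, Matrix.mul_assoc,
      mul_nonsing_inv_cancel_left _ _ ((isUnit_iff_isUnit_det _).mp hΛ),
      one_sub_vecMulVec_single_mul]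
  change ((1 - Λ') * B).submatrix _ _ = _
  rw [hB']
  ext i (j | j) <;>
    simp only [submatrix_apply, Matrix.sub_apply, vecMulVec_apply, fromCols_apply_inl,
      fromCols_apply_inr, Equiv.swap_apply_def, Sum.inl.injEq, Sum.inr.injEq, reduceCtorEq]
  · by_cases hj : j = v
    · simp [hj, u, hΓvw, one_apply, Pi.single_apply]
    · simp [hj, u, one_apply, Ne.symm hj]
  · by_cases hj : j = w
    · simp [hj, u, hΓ', one_apply, Pi.single_apply]
      split_ifs <;> ring
    · simp [hj, u, hΓ', Pi.single_apply]
      ring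

/-- Swapping the column of the path matrix `B = (I − Λ)⁻¹(I | Γ)` belonging to observed
variable `v` with the column belonging to latent variable `w` (normalized so `Γ v w = 1`)
yields the path matrix of the modified parameter pair `(Λ', Γ')`, i.e.
`(I − Λ') ⬝ (B S) = (I | Γ')`, where `S` swaps coordinates `v` and `p + w`, and
`Λ'_{ij} = Λ_{ij} + (Γ_{iw} − δ_{iv})(δ_{vj} − Λ_{vj})`,
`Γ'_{ij} = Γ_{ij} − Γ_{vj}(Γ_{iw} − δ_{iv})` for `j ≠ w`, `Γ'_{iw} = −Γ_{iw} + 2δ_{iv}`. -/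
theorem swap_source_latent_column
    (p ℓ : ℕ) (hp : 1 ≤ p) (hℓ : 1 ≤ ℓ)
    (Λ : Matrix (Fin p) (Fin p) ℝ) (hΛ : IsUnit (1 - Λ))
    (Γ : Matrix (Fin p) (Fin ℓ) ℝ)
    (v : Fin p) (w : Fin ℓ) (hΓvw : Γ v w = 1)
    (B : Matrix (Fin p) (Fin p ⊕ Fin ℓ) ℝ)
    (hB : B = (1 - Λ)⁻¹ * Matrix.fromCols 1 Γ)
    (Λ' : Matrix (Fin p) (Fin p) ℝ)
    (hΛ' : ∀ i j, Λ' i j =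
      Λ i j + (Γ i w - (if i = v then 1 else 0)) *
        ((if v = j then 1 else 0) - Λ v j))
    (Γ' : Matrix (Fin p) (Fin ℓ) ℝ)
    (hΓ' : ∀ i j, Γ' i j =
      if j = w then -Γ i w + 2 * (if i = v then 1 else 0)
      else Γ i j - Γ v j * (Γ i w - (if i = v then 1 else 0))) :
    (1 - Λ') * B.submatrix id (Equiv.swap (Sum.inl v) (Sum.inr w)) =
      Matrix.fromCols 1 Γ' :=
  swap_source_latent_column_general p ℓ Λ hΛ Γ v w hΓvw B hB Λ' hΛ' Γ' hΓ'
end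

section
/- Let p ≥ 2 and let Λ ∈ ℝ^{p×p} be strictly lower triangular (Λ_{ij} = 0 whenever i ≤ j). Then both I_p − Λ and I_{p−1} − Λ', where Λ' = Λ_{2:,2:} is the submatrix of Λ obtained by deleting the first row and first column, are invertible, and (I_{p−1} − Λ')^{-1} equals the submatrix of (I_p − Λ)^{-1} obtained by deleting its first row and first column. -/
/-- det of `1 - M` for strictly lower triangular `M` is 1. -/
lemma det_one_sub_strictLower {n : ℕ} (M : Matrix (Fin n) (Fin n) ℝ)
    (h : ∀ i j : Fin n, i ≤ j → M i j = 0) : (1 - M).det = 1 := by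
  rw [Matrix.det_of_lowerTriangular]
  · simp [Matrix.one_apply, h _ _ le_rfl]
  · intro i j hij
    have hij' : i < j := hij
    simp [Matrix.sub_apply, Matrix.one_apply, Fin.ne_of_lt hij', h i j hij'.le]

/-- For a strictly lower triangular `Λ ∈ ℝ^{p×p}` (`p ≥ 2`), both `I − Λ` and
`I − Λ'` are invertible, where `Λ' = Λ_{2:,2:}` deletes the first row and column, and
`(I − Λ')⁻¹` is the submatrix of `(I − Λ)⁻¹` with the first row and column deleted. -/
theorem inverse_of_principal_submatrix
    (p : ℕ) (hp : 2 ≤ p)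
    (Λ : Matrix (Fin p) (Fin p) ℝ) (hΛ : ∀ i j : Fin p, i ≤ j → Λ i j = 0) :
    IsUnit (1 - Λ) ∧
    IsUnit (1 - Λ.submatrix
      (fun i : Fin (p - 1) => (⟨i.1 + 1, by have := i.isLt; omega⟩ : Fin p))
      (fun i : Fin (p - 1) => (⟨i.1 + 1, by have := i.isLt; omega⟩ : Fin p))) ∧
    (1 - Λ.submatrix
      (fun i : Fin (p - 1) => (⟨i.1 + 1, by have := i.isLt; omega⟩ : Fin p))
      (fun i : Fin (p - 1) => (⟨i.1 + 1, by have := i.isLt; omega⟩ : Fin p)))⁻¹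
    = ((1 - Λ)⁻¹).submatrix
      (fun i : Fin (p - 1) => (⟨i.1 + 1, by have := i.isLt; omega⟩ : Fin p))
      (fun i : Fin (p - 1) => (⟨i.1 + 1, by have := i.isLt; omega⟩ : Fin p)) := by
  set f : Fin (p - 1) → Fin p :=
    fun i => (⟨i.1 + 1, by have := i.isLt; omega⟩ : Fin p) with hf
  have hΛ' : ∀ i j : Fin (p-1), i ≤ j → (Λ.submatrix f f) i j = 0 := by
    intro i j hij
    apply hΛ
    simp only [hf, Fin.mk_le_mk]
    exact Nat.add_le_add_right hij 1
  have hdet : (1 - Λ).det = 1 := det_one_sub_strictLower Λ hΛ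
  have hdet' : (1 - Λ.submatrix f f).det = 1 := det_one_sub_strictLower _ hΛ'
  have hu : IsUnit (1 - Λ) :=
    (Matrix.isUnit_iff_isUnit_det _).2 (by rw [hdet]; exact isUnit_one)
  have hu' : IsUnit (1 - Λ.submatrix f f) :=
    (Matrix.isUnit_iff_isUnit_det _).2 (by rw [hdet']; exact isUnit_one)
  refine ⟨hu, hu', ?_⟩
  -- block triangular structure
  have hA : (1 - Λ).BlockTriangular (fun i : Fin p => (-(i : ℤ))) := by
    intro i j hij
    have hij' : i < j := by
      have h2 : (i:ℤ) < (j:ℤ) := neg_lt_neg_iff.mp hij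
      have h3 : (i:ℕ) < (j:ℕ) := by exact_mod_cast h2
      exact h3
    have h1 : (1 : Matrix (Fin p) (Fin p) ℝ) i j = 0 :=
      Matrix.one_apply_ne (Fin.ne_of_lt hij')
    rw [Matrix.sub_apply, h1, hΛ i j hij'.le, sub_zero]
  haveI : Invertible (1 - Λ) := hu.invertible
  have hblock := hA.inv_toBlock (0 : ℤ)
  -- equivalence between Fin (p-1) and the block index set
  let e : Fin (p - 1) ≃ {i : Fin p // (-(i : ℤ)) < 0} :=
    { toFun := fun i => ⟨f i, by simp [hf]; omega⟩
      invFun := fun i => ⟨i.1.1 - 1, by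
        have h1 : (0:ℤ) < (i.1 : ℤ) := by have := i.2; omega
        have h2 : 0 < i.1.1 := by exact_mod_cast h1
        have := i.1.isLt; omega⟩
      left_inv := fun i => by ext; simp [hf]
      right_inv := fun i => by
        have h1 : (0:ℤ) < (i.1 : ℤ) := by have := i.2; omega
        have h2 : 0 < i.1.1 := by exact_mod_cast h1
        ext; simp [hf]; omega }
  have hsub : ∀ M : Matrix (Fin p) (Fin p) ℝ,
      M.submatrix f f = (M.toBlock (fun i => (-(i:ℤ)) < 0) (fun i => (-(i:ℤ)) < 0)).submatrix e e := by
    intro M; ext i j; rfl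
  calc (1 - Λ.submatrix f f)⁻¹
      = (((1 - Λ).toBlock _ _).submatrix e e)⁻¹ := by
        rw [← hsub]
        congr 1
        ext i j
        simp [Matrix.submatrix_apply, Matrix.sub_apply, Matrix.one_apply, hf, Fin.ext_iff]
    _ = (((1 - Λ).toBlock _ _)⁻¹).submatrix e e := Matrix.inv_submatrix_equiv _ e e
    _ = (((1 - Λ)⁻¹).toBlock _ _).submatrix e e := by rw [hblock]
    _ = ((1 - Λ)⁻¹).submatrix f f := (hsub _).symm
end

section
/- Let p ≥ n ≥ 1 and let S ⊆ {1,…,p} × {1,…,n} be a support set that admits a transversal, i.e., an injective map σ : {1,…,n} → {1,…,p} with (σ(j), j) ∈ S for every j. Then for Lebesgue-almost every assignment of real values (m_s)_{s∈S} ∈ ℝ^S, the matrix M ∈ ℝ^{p×n} defined by M_{ij} = m_{(i,j)} if (i,j) ∈ S and M_{ij} = 0 otherwise has rank n. -/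
open MeasureTheory

/-- The zero set of a nonzero multivariate polynomial over `ℝ` in `Fin k` variables
has Lebesgue measure zero. -/
theorem measure_zeroSet_mvpoly_fin :
    ∀ (k : ℕ) (P : MvPolynomial (Fin k) ℝ), P ≠ 0 →
      volume {x : Fin k → ℝ | MvPolynomial.eval x P = 0} = 0 := by
  intro k
  induction k with
  | zero =>
    intro P hP
    obtain ⟨a, rfl⟩ := MvPolynomial.C_surjective (Fin 0) P
    have ha : a ≠ 0 := fun h => hP (by rw [h, map_zero])
    have : {x : Fin 0 → ℝ | MvPolynomial.eval x (MvPolynomial.C a) = 0} = ∅ := by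
      ext x; simp [ha]
    rw [this]; simp
  | succ k ih =>
    intro P hP
    set Q : Polynomial (MvPolynomial (Fin k) ℝ) := MvPolynomial.finSuccEquiv ℝ k P with hQdef
    have hQ : Q ≠ 0 := by
      intro h
      apply hP
      exact (MvPolynomial.finSuccEquiv ℝ k).injective (by rw [← hQdef, h, map_zero])
    have hlc : Q.leadingCoeff ≠ 0 := Polynomial.leadingCoeff_ne_zero.mpr hQ
    -- zero set of the leading coefficient
    set Zc : Set (Fin k → ℝ) := {y | MvPolynomial.eval y Q.leadingCoeff = 0} with hZcdef
    have hZc : volume Zc = 0 := ih _ hlc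
    -- the main zero set
    set Z : Set (Fin (k + 1) → ℝ) := {x | MvPolynomial.eval x P = 0} with hZdef
    have hZmeas : MeasurableSet Z :=
      (isClosed_singleton.preimage (MvPolynomial.continuous_eval P)).measurableSet
    set e := MeasurableEquiv.piFinSuccAbove (fun _ : Fin (k + 1) => ℝ) 0 with hedef
    have hmp : MeasurePreserving e.symm
        ((volume : Measure ℝ).prod (volume : Measure (Fin k → ℝ))) volume :=
      (volume_preserving_piFinSuccAbove (fun _ : Fin (k + 1) => ℝ) 0).symm
    have hpre : volume Z = (volume.prod volume) (e.symm ⁻¹' Z) :=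
      (hmp.measure_preimage hZmeas.nullMeasurableSet).symm
    have hconsmem : ∀ (a : ℝ) (y : Fin k → ℝ),
        e.symm (a, y) = Fin.cons a y := by
      intro a y
      ext i
      simp [hedef, MeasurableEquiv.piFinSuccAbove, Fin.insertNth_zero]
    have hTslice : ∀ (a : ℝ) (y : Fin k → ℝ),
        ((a, y) ∈ e.symm ⁻¹' Z ↔
          Polynomial.eval a (Polynomial.map (MvPolynomial.eval y) Q) = 0) := by
      intro a y
      simp only [Set.mem_preimage, hZdef, Set.mem_setOf_eq, hconsmem,
        MvPolynomial.eval_eq_eval_mv_eval', hQdef]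
    have hTmeas : MeasurableSet (e.symm ⁻¹' Z) := e.symm.measurable hZmeas
    rw [hpre, Measure.prod_apply_symm hTmeas]
    have hae : ∀ᵐ y : Fin k → ℝ ∂volume,
        volume ((fun a => (a, y)) ⁻¹' (e.symm ⁻¹' Z)) = 0 := by
      filter_upwards [measure_eq_zero_iff_ae_notMem.mp hZc] with y hy
      have hq : Polynomial.map (MvPolynomial.eval y) Q ≠ 0 := by
        intro h
        apply hy
        have : (Polynomial.map (MvPolynomial.eval y) Q).coeff Q.natDegree
            = MvPolynomial.eval y Q.leadingCoeff := by
          rw [Polynomial.coeff_map]; rfl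
        rw [h, Polynomial.coeff_zero] at this
        exact (hZcdef ▸ Set.mem_setOf_eq ▸ this.symm)
      have hfin : Set.Finite {a : ℝ |
          Polynomial.eval a (Polynomial.map (MvPolynomial.eval y) Q) = 0} :=
        Polynomial.finite_setOf_isRoot hq
      have : ((fun a => (a, y)) ⁻¹' (e.symm ⁻¹' Z)) = {a : ℝ |
          Polynomial.eval a (Polynomial.map (MvPolynomial.eval y) Q) = 0} := by
        ext a; exact hTslice a y
      rw [this]
      exact hfin.measure_zero _
    rw [lintegral_congr_ae hae, lintegral_zero]

/-- The zero set of a nonzero multivariate polynomial over `ℝ` in finitely many variables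
has Lebesgue measure zero. -/
theorem measure_zeroSet_mvpoly {ι : Type*} [Fintype ι] (P : MvPolynomial ι ℝ) (hP : P ≠ 0) :
    volume {x : ι → ℝ | MvPolynomial.eval x P = 0} = 0 := by
  classical
  set e := Fintype.equivFin ι with hedef
  set P' : MvPolynomial (Fin (Fintype.card ι)) ℝ := MvPolynomial.rename e P with hP'def
  have hP' : P' ≠ 0 := fun h => hP ((MvPolynomial.rename_injective e e.injective)
    (by rw [← hP'def, h, map_zero]))
  have h0 : volume {x : Fin (Fintype.card ι) → ℝ | MvPolynomial.eval x P' = 0} = 0 :=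
    measure_zeroSet_mvpoly_fin _ P' hP'
  set F := MeasurableEquiv.piCongrLeft (fun _ : ι => ℝ) e.symm with hFdef
  have hmp : MeasurePreserving F volume volume :=
    volume_measurePreserving_piCongrLeft (fun _ : ι => ℝ) e.symm
  have hZmeas : MeasurableSet {x : ι → ℝ | MvPolynomial.eval x P = 0} :=
    (isClosed_singleton.preimage (MvPolynomial.continuous_eval P)).measurableSet
  have hpre : F ⁻¹' {x : ι → ℝ | MvPolynomial.eval x P = 0}
      = {x : Fin (Fintype.card ι) → ℝ | MvPolynomial.eval x P' = 0} := by
    ext x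
    simp only [Set.mem_preimage, Set.mem_setOf_eq, hP'def, MvPolynomial.eval_rename]
    have hFx : (F x : ι → ℝ) = x ∘ e := by
      funext i
      have := Equiv.piCongrLeft_apply_apply (fun _ : ι => ℝ) e.symm x (e i)
      simpa [hFdef, MeasurableEquiv.piCongrLeft] using this
    rw [hFx]
  rw [← hmp.measure_preimage hZmeas.nullMeasurableSet, hpre, h0]

/-- If a support set `S ⊆ [p] × [n]` (with `n ≤ p`) admits a transversal, then for
Lebesgue-almost every assignment of real values to the positions in `S`, the `p × n`
matrix supported on `S` has full column rank `n`. -/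
theorem generic_full_rank_of_transversal
    (p n : ℕ) (hn : 1 ≤ n) (hnp : n ≤ p)
    (S : Finset (Fin p × Fin n))
    (hS : ∃ σ : Fin n → Fin p, Function.Injective σ ∧ ∀ j, (σ j, j) ∈ S) :
    ∀ᵐ m : (↑S → ℝ) ∂volume,
      Matrix.rank
        (Matrix.of fun (i : Fin p) (j : Fin n) =>
          if h : (i, j) ∈ S then m ⟨(i, j), h⟩ else 0) = n := by
  classical
  obtain ⟨σ, hσinj, hσmem⟩ := hS
  -- polynomial matrix
  set N : Matrix (Fin n) (Fin n) (MvPolynomial (↑S : Type) ℝ) :=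
    Matrix.of fun j j' => if h : (σ j, j') ∈ S then MvPolynomial.X ⟨(σ j, j'), h⟩ else 0
    with hNdef
  set P : MvPolynomial (↑S : Type) ℝ := N.det with hPdef
  -- P is nonzero: evaluate at the indicator of the transversal
  have hP : P ≠ 0 := by
    intro h
    set m₀ : (↑S : Type) → ℝ := fun s => if ∃ j : Fin n, ((σ j, j) : Fin p × Fin n) = ↑s then 1 else 0 with hm₀
    have h1 : N.map (MvPolynomial.eval m₀) = 1 := by
      ext j j'
      by_cases hjj : j = j'
      · subst hjj
        simp only [Matrix.map_apply, hNdef, Matrix.of_apply, dif_pos (hσmem j),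
          MvPolynomial.eval_X, hm₀, Matrix.one_apply_eq]
        exact if_pos ⟨j, rfl⟩
      · simp only [Matrix.map_apply, hNdef, Matrix.of_apply, Matrix.one_apply_ne hjj]
        by_cases hmem : (σ j, j') ∈ S
        · rw [dif_pos hmem, MvPolynomial.eval_X, hm₀]
          refine if_neg ?_
          rintro ⟨j'', hj''⟩
          have h2 : σ j'' = σ j ∧ j'' = j' := by
            have := Prod.mk.injEq .. ▸ hj''
            exact ⟨(Prod.ext_iff.mp hj'').1, (Prod.ext_iff.mp hj'').2⟩
          exact hjj (hσinj (h2.2 ▸ h2.1) ▸ h2.2 ▸ rfl)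
        · rw [dif_neg hmem, map_zero]
    have : MvPolynomial.eval m₀ P = 1 := by
      rw [hPdef, ← Matrix.det_one (n := Fin n), ← h1]
      exact RingHom.map_det (MvPolynomial.eval m₀) N
    rw [h, map_zero] at this
    exact zero_ne_one this
  have hZ : volume {m : (↑S : Type) → ℝ | MvPolynomial.eval m P = 0} = 0 :=
    measure_zeroSet_mvpoly P hP
  have hae : ∀ᵐ m : (↑S : Type) → ℝ ∂volume, MvPolynomial.eval m P ≠ 0 :=
    measure_eq_zero_iff_ae_notMem.mp hZ
  filter_upwards [hae] with m hm
  set M : Matrix (Fin p) (Fin n) ℝ :=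
    Matrix.of fun (i : Fin p) (j : Fin n) =>
      if h : (i, j) ∈ S then m ⟨(i, j), h⟩ else 0 with hMdef
  -- the selected square submatrix equals the evaluated polynomial matrix
  have hsub : N.map (MvPolynomial.eval m) = M.submatrix σ id := by
    ext j j'
    simp only [Matrix.map_apply, hNdef, Matrix.of_apply, Matrix.submatrix_apply, id_eq,
      hMdef]
    by_cases hmem : (σ j, j') ∈ S
    · rw [dif_pos hmem, dif_pos hmem, MvPolynomial.eval_X]
    · rw [dif_neg hmem, dif_neg hmem, map_zero]
  have hdet : (M.submatrix σ id).det ≠ 0 := by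
    rw [← hsub]
    have h2 := (RingHom.map_det (MvPolynomial.eval m) N).symm
    rw [RingHom.mapMatrix_apply] at h2
    rw [h2]
    exact hm
  -- rank bounds
  have hle : M.rank ≤ n := by
    simpa using M.rank_le_card_width
  have hge : n ≤ M.rank := by
    -- write the submatrix as B * M
    set B : Matrix (Fin n) (Fin p) ℝ := Matrix.of fun j i => if i = σ j then 1 else 0 with hBdef
    have hBM : B * M = M.submatrix σ id := by
      ext j j'
      simp only [Matrix.mul_apply, hBdef, Matrix.of_apply, Matrix.submatrix_apply, id_eq]
      rw [Finset.sum_eq_single (σ j)]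
      · simp
      · intro i _ hi; simp [hi]
      · intro h; exact absurd (Finset.mem_univ _) h
    have hunit : IsUnit (M.submatrix σ id) :=
      (Matrix.isUnit_iff_isUnit_det _).mpr (isUnit_iff_ne_zero.mpr hdet)
    have hrk : (M.submatrix σ id).rank = n := by
      simpa using Matrix.rank_of_isUnit _ hunit
    calc n = (M.submatrix σ id).rank := hrk.symm
      _ = (B * M).rank := by rw [hBM]
      _ ≤ M.rank := Matrix.rank_mul_le_right B M
  exact le_antisymm hle hge
end

section
/- Let ℓ ≥ 1, let ε_1, ε_2, L_1, …, L_ℓ be real numbers (or real-valued random variables, with all identities holding pointwise), let λ, γ_1, …, γ_ℓ ∈ ℝ, and fix j ∈ {1,…,ℓ}. Define X_1 = ε_1 + Σ_{i=1}^{ℓ} L_i and X_2 = λ X_1 + Σ_{i=1}^{ℓ} γ_i L_i + ε_2. Define the swapped parameters and sources ε_1' = L_j, L_j' = ε_1, L_i' = L_i for i ≠ j, λ' = λ + γ_j, γ_j' = −γ_j, and γ_i' = γ_i − γ_j for i ≠ j. Then X_1 = ε_1' + Σ_{i=1}^{ℓ} L_i' and X_2 = λ' X_1 + Σ_{i=1}^{ℓ}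 γ_i' L_i' + ε_2. -/
/-- Non-identifiability in the two-variable model `𝓜_{2,ℓ}`: swapping the noise `ε₁` of the
source with a latent `L_j` and adjusting the coefficients by `λ' = λ + γ_j`, `γ_j' = −γ_j`,
`γ_i' = γ_i − γ_j` (`i ≠ j`) leaves `X₁` and `X₂` unchanged. -/
theorem swap_noise_with_latent
    (ℓ : ℕ) (hℓ : 1 ≤ ℓ)
    (ε₁ ε₂ : ℝ) (L : Fin ℓ → ℝ) (lam : ℝ) (γ : Fin ℓ → ℝ) (j : Fin ℓ)
    (X₁ X₂ : ℝ)
    (hX₁ : X₁ = ε₁ + ∑ i, L i)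
    (hX₂ : X₂ = lam * X₁ + (∑ i, γ i * L i) + ε₂)
    (ε₁' : ℝ) (hε₁' : ε₁' = L j)
    (L' : Fin ℓ → ℝ) (hL'j : L' j = ε₁) (hL' : ∀ i ≠ j, L' i = L i)
    (lam' : ℝ) (hlam' : lam' = lam + γ j)
    (γ' : Fin ℓ → ℝ) (hγ'j : γ' j = -γ j) (hγ' : ∀ i ≠ j, γ' i = γ i - γ j) :
    X₁ = ε₁' + ∑ i, L' i ∧ X₂ = lam' * X₁ + (∑ i, γ' i * L' i) + ε₂ := by
  have hL : ∑ i, L i = L j + ∑ i ∈ Finset.univ.erase j, L i :=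
    (Finset.add_sum_erase _ _ (Finset.mem_univ j)).symm
  have hG : ∑ i, γ i * L i = γ j * L j + ∑ i ∈ Finset.univ.erase j, γ i * L i :=
    (Finset.add_sum_erase _ _ (Finset.mem_univ j)).symm
  have h1 : ∑ i, L' i = ε₁ + ∑ i ∈ Finset.univ.erase j, L i := by
    rw [← Finset.add_sum_erase _ _ (Finset.mem_univ j), hL'j]
    congr 1
    exact Finset.sum_congr rfl fun i hi => hL' i (Finset.ne_of_mem_erase hi)
  have h2 : ∑ i, γ' i * L' i
      = -γ j * ε₁ + ((∑ i ∈ Finset.univ.erase j, γ i * L i)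
        - γ j * ∑ i ∈ Finset.univ.erase j, L i) := by
    rw [← Finset.add_sum_erase _ _ (Finset.mem_univ j), hγ'j, hL'j]
    congr 1
    rw [Finset.mul_sum, ← Finset.sum_sub_distrib]
    refine Finset.sum_congr rfl fun i hi => ?_
    rw [hγ' i (Finset.ne_of_mem_erase hi), hL' i (Finset.ne_of_mem_erase hi)]
    ring
  constructor
  · rw [hX₁, hε₁', h1, hL]; ring
  · rw [hX₂, hlam', h2, hG, hX₁, hL]; ring
end

section
/- Let (Ω, 𝔽, P) be a probability space, let ε_1 and ε_2 be independent real random variables with E[ε_1] = E[ε_2] = 0 and E[|ε_1|^3], E[|ε_2|^3] < ∞, let λ ∈ ℝ, and set X_1 = ε_1 and X_2 = λ X_1 + ε_2. Then the 3 × 2 real matrix A = [[E[X_1^2], E[X_1 X_2]], [E[X_1^3], E[X_1^2 X_2]], [E[X_1^2 X_2], E[X_1 X_2^2]]] has rank at most 1. -/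
/-!
Since `ε₂` is centered and independent of `ε₁`, multiplying `X₂ = λ ε₁ + ε₂` by a function of
`ε₁` and integrating simply replaces `X₂` by `λ ε₁`; together with `E[ε₁ ε₂²] = E[ε₁] E[ε₂²] = 0`
this shows that the second column of `A` is `λ` times the first, so `A` has rank at most one.
-/

open MeasureTheory ProbabilityTheory

theorem Matrix.rank_le_one_of_forall_col_eq_mul {m R : Type*} [Fintype m] [CommSemiring R]
    [StrongRankCondition R] (M : Matrix m (Fin 2) R) (c : R) (h : ∀ i, M i 1 = c * M i 0) :
    M.rank ≤ 1 := by
  have hM : M = vecMulVec (fun i => M i 0) ![1, c] := by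
    ext i j
    fin_cases j <;> simp [vecMulVec_apply, h, mul_comm]
  exact hM ▸ rank_vecMulVec_le _ _

section Moments

variable {Ω : Type*} [MeasurableSpace Ω] {μ : Measure Ω}

theorem MeasureTheory.MemLp.integrable_pow_of_le [IsFiniteMeasure μ] {f : Ω → ℝ} {p k : ℕ}
    (hf : MemLp f p μ) (hk : k ≤ p) : Integrable (fun ω => f ω ^ k) μ := by
  have hfk : MemLp f k μ := hf.mono_exponent (by exact_mod_cast hk)
  refine (integrable_norm_iff (hf.1.pow k)).1 ?_
  simpa only [Pi.pow_apply, norm_pow] using hfk.integrable_norm_pow'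

theorem ProbabilityTheory.IndepFun.integral_pow_mul_add {X Y : Ω → ℝ} (hXY : IndepFun X Y μ)
    (hY : Integrable Y μ) (hY₀ : ∫ ω, Y ω ∂μ = 0) {a : ℕ}
    (ha : Integrable (fun ω => X ω ^ a) μ) (ha₁ : Integrable (fun ω => X ω ^ (a + 1)) μ)
    (c : ℝ) :
    ∫ ω, X ω ^ a * (c * X ω + Y ω) ∂μ = c * ∫ ω, X ω ^ (a + 1) ∂μ := by
  have hXaY : IndepFun (fun ω => X ω ^ a) Y μ := hXY.comp (measurable_id.pow_const a) measurable_id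
  have hint : Integrable (fun ω => X ω ^ a * Y ω) μ := hXaY.integrable_mul ha hY
  have h₀ : ∫ ω, X ω ^ a * Y ω ∂μ = 0 := by
    rw [hXaY.integral_fun_mul_eq_mul_integral ha.1 hY.1, hY₀, mul_zero]
  calc ∫ ω, X ω ^ a * (c * X ω + Y ω) ∂μ
      = ∫ ω, c * X ω ^ (a + 1) + X ω ^ a * Y ω ∂μ := by
        congr 1; ext ω; ring
    _ = c * ∫ ω, X ω ^ (a + 1) ∂μ := by
        rw [integral_add (ha₁.const_mul c) hint, integral_const_mul, h₀, add_zero]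

theorem ProbabilityTheory.IndepFun.integral_mul_add_sq [IsFiniteMeasure μ] {X Y : Ω → ℝ}
    (hXY : IndepFun X Y μ) (hX : MemLp X 3 μ) (hY : MemLp Y 2 μ)
    (hX₀ : ∫ ω, X ω ∂μ = 0) (hY₀ : ∫ ω, Y ω ∂μ = 0) (c : ℝ) :
    ∫ ω, X ω * (c * X ω + Y ω) ^ 2 ∂μ = c ^ 2 * ∫ ω, X ω ^ 3 ∂μ := by
  have hX₁ : Integrable X μ := hX.integrable (by norm_num)
  have hX₂ : Integrable (fun ω => X ω ^ 2) μ := hX.integrable_pow_of_le (by norm_num)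
  have hX₃ : Integrable (fun ω => X ω ^ 3) μ := hX.integrable_pow_of_le le_rfl
  have hY₁ : Integrable Y μ := hY.integrable (by norm_num)
  have hY₂ : Integrable (fun ω => Y ω ^ 2) μ := hY.integrable_sq
  have hX₂Y : IndepFun (fun ω => X ω ^ 2) Y μ := hXY.comp (measurable_id.pow_const 2) measurable_id
  have hXY₂ : IndepFun X (fun ω => Y ω ^ 2) μ := hXY.comp measurable_id (measurable_id.pow_const 2)
  have hint₂₁ : Integrable (fun ω => X ω ^ 2 * Y ω) μ := hX₂Y.integrable_mul hX₂ hY₁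
  have hint₁₂ : Integrable (fun ω => X ω * Y ω ^ 2) μ := hXY₂.integrable_mul hX₁ hY₂
  have h₂₁ : ∫ ω, X ω ^ 2 * Y ω ∂μ = 0 := by
    rw [hX₂Y.integral_fun_mul_eq_mul_integral hX₂.1 hY₁.1, hY₀, mul_zero]
  have h₁₂ : ∫ ω, X ω * Y ω ^ 2 ∂μ = 0 := by
    rw [hXY₂.integral_fun_mul_eq_mul_integral hX₁.1 hY₂.1, hX₀, zero_mul]
  calc ∫ ω, X ω * (c * X ω + Y ω) ^ 2 ∂μ
      = ∫ ω, c ^ 2 * X ω ^ 3 + (2 * c * (X ω ^ 2 * Y ω) + X ω * Y ω ^ 2) ∂μ := by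
        congr 1; ext ω; ring
    _ = c ^ 2 * ∫ ω, X ω ^ 3 ∂μ := by
        rw [integral_add (hX₃.const_mul _) ?_,
          integral_add (hint₂₁.const_mul _) hint₁₂, integral_const_mul, integral_const_mul, h₂₁,
          h₁₂]
        · ring
        · exact (hint₂₁.const_mul _).add hint₁₂

end Moments

theorem rank_condition_no_latent_general
    {Ω : Type*} [MeasureSpace Ω] (hP : IsProbabilityMeasure (volume : Measure Ω))
    (ε₁ ε₂ : Ω → ℝ)
    (hindep : IndepFun ε₁ ε₂ volume)
    (hmean₁ : ∫ ω, ε₁ ω = 0) (hmean₂ : ∫ ω, ε₂ ω = 0)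
    (hL3₁ : MemLp ε₁ 3 volume) (hL3₂ : MemLp ε₂ 3 volume)
    (lam : ℝ) (X₁ X₂ : Ω → ℝ)
    (hX₁ : ∀ ω, X₁ ω = ε₁ ω) (hX₂ : ∀ ω, X₂ ω = lam * X₁ ω + ε₂ ω) :
    Matrix.rank
      !![∫ ω, X₁ ω * X₁ ω,       ∫ ω, X₁ ω * X₂ ω;
         ∫ ω, X₁ ω ^ 3,          ∫ ω, X₁ ω ^ 2 * X₂ ω;
         ∫ ω, X₁ ω ^ 2 * X₂ ω,   ∫ ω, X₁ ω * X₂ ω ^ 2] ≤ 1 := by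
  obtain rfl : X₁ = ε₁ := funext hX₁
  obtain rfl : X₂ = fun ω => lam * X₁ ω + ε₂ ω := funext hX₂
  have hpow (k : ℕ) (hk : k ≤ 3) : Integrable (fun ω => X₁ ω ^ k) := hL3₁.integrable_pow_of_le hk
  have hε₂ : Integrable ε₂ := hL3₂.integrable (by norm_num)
  have row₀ : ∫ ω, X₁ ω * (lam * X₁ ω + ε₂ ω) = lam * ∫ ω, X₁ ω * X₁ ω := by
    simpa only [pow_one, ← sq] using
      hindep.integral_pow_mul_add hε₂ hmean₂ (hpow 1 (by norm_num)) (hpow 2 (by norm_num)) lam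
  have row₁ : ∫ ω, X₁ ω ^ 2 * (lam * X₁ ω + ε₂ ω) = lam * ∫ ω, X₁ ω ^ 3 :=
    hindep.integral_pow_mul_add hε₂ hmean₂ (hpow 2 (by norm_num)) (hpow 3 le_rfl) lam
  have row₂ : ∫ ω, X₁ ω * (lam * X₁ ω + ε₂ ω) ^ 2
      = lam * ∫ ω, X₁ ω ^ 2 * (lam * X₁ ω + ε₂ ω) := by
    rw [hindep.integral_mul_add_sq hL3₁ (hL3₂.mono_exponent (by norm_num)) hmean₁ hmean₂, row₁]
    ring
  refine Matrix.rank_le_one_of_forall_col_eq_mul _ lam fun i => ?_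
  fin_cases i
  exacts [row₀, row₁, row₂]

/-- Example 3.1, `ℓ = 0` case: in the two-variable model `X₁ = ε₁`, `X₂ = λ X₁ + ε₂` with
independent centered noises having finite third absolute moments, the matrix
`A^{(2,3)}_{1→2}` of second- and third-order cumulants (= moments) has rank at most `1`. -/
theorem rank_condition_no_latent
    {Ω : Type*} [MeasureSpace Ω] (hP : IsProbabilityMeasure (volume : Measure Ω))
    (ε₁ ε₂ : Ω → ℝ)
    (hmeas₁ : Measurable ε₁) (hmeas₂ : Measurable ε₂)
    (hindep : IndepFun ε₁ ε₂ volume)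
    (hmean₁ : ∫ ω, ε₁ ω = 0) (hmean₂ : ∫ ω, ε₂ ω = 0)
    (hL3₁ : MemLp ε₁ 3 volume) (hL3₂ : MemLp ε₂ 3 volume)
    (lam : ℝ) (X₁ X₂ : Ω → ℝ)
    (hX₁ : ∀ ω, X₁ ω = ε₁ ω) (hX₂ : ∀ ω, X₂ ω = lam * X₁ ω + ε₂ ω) :
    Matrix.rank
      !![∫ ω, X₁ ω * X₁ ω,       ∫ ω, X₁ ω * X₂ ω;
         ∫ ω, X₁ ω ^ 3,          ∫ ω, X₁ ω ^ 2 * X₂ ω;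
         ∫ ω, X₁ ω ^ 2 * X₂ ω,   ∫ ω, X₁ ω * X₂ ω ^ 2] ≤ 1 :=
  rank_condition_no_latent_general hP ε₁ ε₂ hindep hmean₁ hmean₂ hL3₁ hL3₂ lam X₁ X₂ hX₁ hX₂
end
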